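/- arXiv:2407.04150 — 2 statements merged into one kernel-verified Lean document; each statement's English description precedes it below -/
import Mathlib

section
/- If a graph G on n > 4 vertices is factored into graphs H and K, each without isolated vertices, then |E(G)| ≤ (1/2)·|E(H)|·|E(K)|. -/
/-!
Write `x v = deg_H v` and `y v = deg_K v`. Summing all entries of `A_G = A_H A_K` gives
`2|E(G)| = ∑ x v y v`, and since `A_G` has zero diagonal, the `H`- and `K`-neighbourhoods of each
vertex are disjoint, so `1 ≤ x v, y v` and `x v + y v ≤ n - 1`. With `p v = √(x v y v)`, which lies
in `[1, (n - 1) / 2]`, Cauchy–Schwarz gives `(∑ p)² ≤ (∑ x)(∑ y) = 4|E(H)||E(K)|`, while the chord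
bound `p² ≤ ((n + 1) p - (n - 1)) / 2` on that interval gives `4 ∑ p² ≤ (∑ p)²` as soon as `n ≥ 5`.
-/

open SimpleGraph Matrix Finset

theorem four_mul_sum_sq_le_sq_sum {ι : Type*} [Fintype ι] (p : ι → ℝ)
    (hn : 5 ≤ Fintype.card ι) (hp : ∀ i, 1 ≤ p i) (hp' : ∀ i, 2 * p i ≤ Fintype.card ι - 1) :
    4 * ∑ i, p i ^ 2 ≤ (∑ i, p i) ^ 2 := by
  have hn5 : (5 : ℝ) ≤ Fintype.card ι := by exact_mod_cast hn
  set n : ℝ := (Fintype.card ι : ℝ)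
  have hchord (i : ι) : 4 * p i ^ 2 ≤ 2 * (n + 1) * p i - 2 * (n - 1) := by
    nlinarith [mul_nonneg (sub_nonneg.mpr (hp i)) (sub_nonneg.mpr (hp' i))]
  have hsum : 4 * ∑ i, p i ^ 2 ≤ 2 * (n + 1) * ∑ i, p i - 2 * (n - 1) * n := by
    rw [mul_sum, mul_sum]
    simpa [sum_sub_distrib, n, mul_comm] using sum_le_sum fun i (_ : i ∈ univ) => hchord i
  -- `P² - 2(n + 1)P + 2n(n - 1) = (P - (n + 1))² + n² - 4n - 1`, and `n² - 4n - 1 > 0` for `n ≥ 5`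
  nlinarith [sq_nonneg (∑ i, p i - (n + 1))]

theorem four_mul_sum_mul_le_sum_mul_sum {ι : Type*} [Fintype ι] (x y : ι → ℝ)
    (hn : 5 ≤ Fintype.card ι) (hx : ∀ i, 1 ≤ x i) (hy : ∀ i, 1 ≤ y i)
    (hxy : ∀ i, x i + y i ≤ Fintype.card ι - 1) :
    4 * ∑ i, x i * y i ≤ (∑ i, x i) * ∑ i, y i := by
  have hx0 (i : ι) : 0 ≤ x i := zero_le_one.trans (hx i)
  have hy0 (i : ι) : 0 ≤ y i := zero_le_one.trans (hy i)
  set p : ι → ℝ := fun i => √(x i) * √(y i)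
  have hp_sq (i : ι) : p i ^ 2 = x i * y i := by
    simp only [p, mul_pow, Real.sq_sqrt (hx0 i), Real.sq_sqrt (hy0 i)]
  have hp_one (i : ι) : 1 ≤ p i :=
    one_le_mul_of_one_le_of_one_le (Real.one_le_sqrt.mpr (hx i)) (Real.one_le_sqrt.mpr (hy i))
  have hp_amgm (i : ι) : 2 * p i ≤ x i + y i := by
    nlinarith [sq_nonneg (√(x i) - √(y i)), Real.sq_sqrt (hx0 i), Real.sq_sqrt (hy0 i)]
  have hcs : (∑ i, p i) ^ 2 ≤ (∑ i, x i) * ∑ i, y i := by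
    simpa [Real.sq_sqrt (hx0 _), Real.sq_sqrt (hy0 _)] using
      sum_mul_sq_le_sq_mul_sq univ (fun i => √(x i)) (fun i => √(y i))
  calc 4 * ∑ i, x i * y i = 4 * ∑ i, p i ^ 2 := by simp only [hp_sq]
    _ ≤ (∑ i, p i) ^ 2 :=
      four_mul_sum_sq_le_sq_sum p hn hp_one fun i => (hp_amgm i).trans (hxy i)
    _ ≤ _ := hcs

namespace SimpleGraph

variable {V R : Type*} [Fintype V] (G H K : SimpleGraph V)
  [DecidableRel G.Adj] [DecidableRel H.Adj] [DecidableRel K.Adj]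

theorem sum_sum_adjMatrix [NonAssocSemiring R] :
    ∑ v, ∑ w, G.adjMatrix R v w = 2 * #G.edgeFinset := by
  have hrow (v : V) : ∑ w, G.adjMatrix R v w = G.degree v := by
    simpa [mulVec, dotProduct] using G.adjMatrix_mulVec_const_apply (α := R) (a := 1) (v := v)
  simp only [hrow, ← Nat.cast_sum, G.sum_degrees_eq_twice_card_edges, Nat.cast_mul, Nat.cast_ofNat]

theorem sum_sum_adjMatrix_mul_adjMatrix [Semiring R] :
    ∑ v, ∑ w, (H.adjMatrix R * K.adjMatrix R) v w = ∑ u, (H.degree u * K.degree u : R) := by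
  calc ∑ v, ∑ w, (H.adjMatrix R * K.adjMatrix R) v w
      = 1 ⬝ᵥ H.adjMatrix R *ᵥ K.adjMatrix R *ᵥ 1 := by
        rw [mulVec_mulVec]; simp only [dotProduct, mulVec, Pi.one_apply, one_mul, mul_one]
    _ = (1 ᵥ* H.adjMatrix R) ⬝ᵥ K.adjMatrix R *ᵥ 1 := dotProduct_mulVec _ _ _
    _ = ∑ u, (H.degree u * K.degree u : R) := by simp [dotProduct]

theorem adjMatrix_mul_adjMatrix_apply [NonAssocSemiring R] (v w : V) :
    (H.adjMatrix R * K.adjMatrix R) v w = #{u ∈ H.neighborFinset v | K.Adj u w} := by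
  simp only [adjMatrix_mul_apply, adjMatrix_apply, sum_boole]

theorem disjoint_neighborFinset_of_adjMatrix_eq_mul [NonAssocSemiring R] [CharZero R]
    (hfac : G.adjMatrix R = H.adjMatrix R * K.adjMatrix R) (v : V) :
    Disjoint (H.neighborFinset v) (K.neighborFinset v) := by
  have hdiag := congrFun (congrFun hfac v) v
  rw [adjMatrix_mul_adjMatrix_apply, adjMatrix_apply, if_neg G.irrefl] at hdiag
  have hpaths : {u ∈ H.neighborFinset v | K.Adj u v} = ∅ :=
    card_eq_zero.mp (by exact_mod_cast hdiag.symm)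
  rw [Finset.disjoint_left]
  intro u hH hK
  rw [mem_neighborFinset] at hK
  exact filter_eq_empty_iff.mp hpaths hH hK.symm

theorem degree_add_degree_lt_card_of_disjoint (v : V)
    (hdisj : Disjoint (H.neighborFinset v) (K.neighborFinset v)) :
    H.degree v + K.degree v < Fintype.card V := by
  classical
  rw [← card_neighborFinset_eq_degree, ← card_neighborFinset_eq_degree,
    ← card_union_of_disjoint hdisj]
  exact card_lt_univ_of_notMem (x := v) (by simp)

end SimpleGraph

theorem stmt5 {n : ℕ} (hn : 4 < n) (G H K : SimpleGraph (Fin n))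
    [DecidableRel G.Adj] [DecidableRel H.Adj] [DecidableRel K.Adj]
    (hfac : G.adjMatrix ℝ = H.adjMatrix ℝ * K.adjMatrix ℝ)
    (hH : ∀ v, 0 < H.degree v) (hK : ∀ v, 0 < K.degree v) :
    2 * G.edgeFinset.card ≤ H.edgeFinset.card * K.edgeFinset.card := by
  have hdeg (v : Fin n) : (H.degree v : ℝ) + K.degree v ≤ (Fintype.card (Fin n) : ℝ) - 1 := by
    rw [le_sub_iff_add_le]
    exact_mod_cast degree_add_degree_lt_card_of_disjoint H K v
      (disjoint_neighborFinset_of_adjMatrix_eq_mul G H K hfac v)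
  have hG : ∑ v, (H.degree v * K.degree v : ℝ) = 2 * #G.edgeFinset := by
    rw [← sum_sum_adjMatrix_mul_adjMatrix, ← hfac, sum_sum_adjMatrix]
  have hsum (L : SimpleGraph (Fin n)) [DecidableRel L.Adj] :
      ∑ v, (L.degree v : ℝ) = 2 * #L.edgeFinset := by
    exact_mod_cast L.sum_degrees_eq_twice_card_edges
  have key := four_mul_sum_mul_le_sum_mul_sum (fun v => (H.degree v : ℝ)) (fun v => K.degree v)
    (by rw [Fintype.card_fin]; omega) (fun v => by exact_mod_cast hH v)
    (fun v => by exact_mod_cast hK v) hdeg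
  rw [hG, hsum H, hsum K] at key
  exact_mod_cast (by linarith : (2 * #G.edgeFinset : ℝ) ≤ #H.edgeFinset * #K.edgeFinset)
end

section
/- Let a graph G of order n be factored into graphs H and K. If G contains no 4-cycle and has no isolated vertices, then n is even. -/
/-!
If `A_G = A_H A_K`, then `x ~_G y` iff `x ~_H v ~_K y` for some `v`, and summing all entries of
`A_H A_K` gives `∑ deg_G = ∑ deg_H · deg_K`. A vertex with two `H`-neighbours and two
`K`-neighbours would create a 4-cycle in `G`, and no vertex is isolated in `H` or `K`, so
`deg_H v · deg_K v = deg_H v + deg_K v - 1` for every `v`. Summing over `v` gives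
`2|E(G)| = 2|E(H)| + 2|E(K)| - n`.
-/

open SimpleGraph Matrix Finset

namespace SimpleGraph

variable {V R : Type*} {G H K : SimpleGraph V}

theorem adj_of_adj_of_adj_eq_comp (hcomp : G.Adj = Relation.Comp H.Adj K.Adj) {v a c : V}
    (ha : H.Adj v a) (hc : K.Adj v c) : G.Adj a c := by
  rw [hcomp]
  exact ⟨v, ha.symm, hc⟩

variable [Fintype V]

theorem degree_pos_left_of_adj_eq_comp [DecidableRel G.Adj] [DecidableRel H.Adj]
    (hcomp : G.Adj = Relation.Comp H.Adj K.Adj) {x : V} (hx : 0 < G.degree x) :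
    0 < H.degree x := by
  obtain ⟨y, hxy⟩ := (G.degree_pos_iff_exists_adj x).1 hx
  rw [hcomp] at hxy
  obtain ⟨v, hxv, -⟩ := hxy
  exact (H.degree_pos_iff_exists_adj x).2 ⟨v, hxv⟩

theorem degree_pos_right_of_adj_eq_comp [DecidableRel G.Adj] [DecidableRel K.Adj]
    (hcomp : G.Adj = Relation.Comp H.Adj K.Adj) {x : V} (hx : 0 < G.degree x) :
    0 < K.degree x := by
  obtain ⟨y, hxy⟩ := (G.degree_pos_iff_exists_adj x).1 hx
  rw [← G.adj_comm, hcomp] at hxy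
  obtain ⟨v, -, hvx⟩ := hxy
  exact (K.degree_pos_iff_exists_adj x).2 ⟨v, hvx.symm⟩

theorem degree_le_one_or_degree_le_one_of_adj_eq_comp [DecidableRel H.Adj] [DecidableRel K.Adj]
    (hcomp : G.Adj = Relation.Comp H.Adj K.Adj)
    (hC4 : ∀ a b c d, G.Adj a b → G.Adj b c → G.Adj c d → G.Adj d a → a = c ∨ b = d) (v : V) :
    H.degree v ≤ 1 ∨ K.degree v ≤ 1 := by
  by_contra! h
  obtain ⟨a, ha, b, hb, hab⟩ := Finset.one_lt_card.1 h.1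
  obtain ⟨c, hc, d, hd, hcd⟩ := Finset.one_lt_card.1 h.2
  rw [mem_neighborFinset] at ha hb hc hd
  have hG {x y : V} (hx : H.Adj v x) (hy : K.Adj v y) : G.Adj x y :=
    adj_of_adj_of_adj_eq_comp hcomp hx hy
  exact (hC4 a c b d (hG ha hc) (hG hb hc).symm (hG hb hd) (hG ha hd).symm).elim hab hcd

variable [DecidableRel G.Adj] [DecidableRel H.Adj] [DecidableRel K.Adj]

theorem adjMatrix_mul_apply_eq_card [NonAssocSemiring R] (x y : V) :
    (H.adjMatrix R * K.adjMatrix R) x y = #{v | H.Adj x v ∧ K.Adj v y} := by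
  simp only [mul_apply, adjMatrix_apply, ite_zero_mul_ite_zero, mul_one, sum_boole]

theorem comp_adj_iff_card_ne_zero (x y : V) :
    Relation.Comp H.Adj K.Adj x y ↔ #{v | H.Adj x v ∧ K.Adj v y} ≠ 0 := by
  simp [Relation.Comp]

theorem adj_eq_comp_of_adjMatrix_eq_mul [NonAssocSemiring R] [CharZero R]
    (hfac : G.adjMatrix R = H.adjMatrix R * K.adjMatrix R) :
    G.Adj = Relation.Comp H.Adj K.Adj := by
  ext x y
  have hxy : ((if G.Adj x y then 1 else 0 : ℕ) : R) = (#{v | H.Adj x v ∧ K.Adj v y} : ℕ) := by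
    rw [← adjMatrix_mul_apply_eq_card, ← hfac, adjMatrix_apply, Nat.cast_ite, Nat.cast_one,
      Nat.cast_zero]
  rw [Nat.cast_inj] at hxy
  rw [comp_adj_iff_card_ne_zero, ← hxy]
  split_ifs <;> simpa

theorem sum_degree_eq_sum_degree_mul_degree_of_adjMatrix_eq_mul [Semiring R] [CharZero R]
    (hfac : G.adjMatrix R = H.adjMatrix R * K.adjMatrix R) :
    ∑ v, G.degree v = ∑ v, H.degree v * K.degree v := by
  apply Nat.cast_injective (R := R)
  calc ((∑ v, G.degree v : ℕ) : R) = 1 ⬝ᵥ (G.adjMatrix R *ᵥ 1) := by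
        simp [one_dotProduct]
    _ = (1 ᵥ* H.adjMatrix R) ⬝ᵥ (K.adjMatrix R *ᵥ 1) := by
        rw [hfac, ← mulVec_mulVec, dotProduct_mulVec]
    _ = ((∑ v, H.degree v * K.degree v : ℕ) : R) := by
        simp [dotProduct]

end SimpleGraph

theorem stmt17 {n : ℕ} (G H K : SimpleGraph (Fin n))
    [DecidableRel G.Adj] [DecidableRel H.Adj] [DecidableRel K.Adj]
    (hfac : G.adjMatrix ℝ = H.adjMatrix ℝ * K.adjMatrix ℝ)
    (hC4 : ∀ a b c d : Fin n, G.Adj a b → G.Adj b c → G.Adj c d → G.Adj d a →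
      a = c ∨ b = d)
    (hiso : ∀ v, 0 < G.degree v) :
    Even n := by
  have hcomp := adj_eq_comp_of_adjMatrix_eq_mul hfac
  have hvertex (v : Fin n) : H.degree v * K.degree v + 1 = H.degree v + K.degree v := by
    have hH := degree_pos_left_of_adj_eq_comp hcomp (hiso v)
    have hK := degree_pos_right_of_adj_eq_comp hcomp (hiso v)
    rcases degree_le_one_or_degree_le_one_of_adj_eq_comp hcomp hC4 v with h | h
    · rw [le_antisymm h hH]; ring
    · rw [le_antisymm h hK]; ring
  have hsum : ∑ v, G.degree v + n = ∑ v, H.degree v + ∑ v, K.degree v := by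
    rw [sum_degree_eq_sum_degree_mul_degree_of_adjMatrix_eq_mul hfac, ← sum_add_distrib,
      ← Finset.sum_congr rfl fun v _ => hvertex v, sum_add_distrib]
    simp
  rw [G.sum_degrees_eq_twice_card_edges, H.sum_degrees_eq_twice_card_edges,
    K.sum_degrees_eq_twice_card_edges] at hsum
  exact ⟨#H.edgeFinset + #K.edgeFinset - #G.edgeFinset, by omega⟩
end
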